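/- Let u : ℝ³ → ℂ be smooth with |u(x)| < 1 for all x, and satisfy the QP¹-model equation of motion (1−|u|²)□u + 2ū⟨∂u,∂u⟩ = 0. Then the complex conjugate current j̄_μ = (∂_μū − ū²·∂_μu)/(1−|u|²)², μ = 0,1,2, is a conserved current, i.e. ∂₀j̄₀ − ∂₁j̄₁ − ∂₂j̄₂ = 0 on ℝ³. -/

import Mathlib

open Complex ComplexConjugate Finset

/-- Partial derivative in direction `μ` of a complex-valued function on `ℝ³`. -/
noncomputable def pd (μ : Fin 3) (f : (Fin 3 → ℝ) → ℂ) (x : Fin 3 → ℝ) : ℂ :=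
  fderiv ℝ f x (Pi.single μ 1)

/-- The d'Alembertian `□u = ∂₀∂₀u − ∂₁∂₁u − ∂₂∂₂u` for the metric `diag(1,−1,−1)`. -/
noncomputable def dalembert (u : (Fin 3 → ℝ) → ℂ) (x : Fin 3 → ℝ) : ℂ :=
  pd 0 (pd 0 u) x - pd 1 (pd 1 u) x - pd 2 (pd 2 u) x

/-- Minkowski product of gradients `⟨∂f,∂g⟩ = ∂₀f·∂₀g − ∂₁f·∂₁g − ∂₂f·∂₂g`. -/
noncomputable def minkGrad (f g : (Fin 3 → ℝ) → ℂ) (x : Fin 3 → ℝ) : ℂ :=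
  pd 0 f x * pd 0 g x - pd 1 f x * pd 1 g x - pd 2 f x * pd 2 g x

/-- `(J₀,J₁,J₂)` is a conserved current if `∂₀J₀ − ∂₁J₁ − ∂₂J₂ = 0` identically. -/
def IsConservedCurrent (J : Fin 3 → (Fin 3 → ℝ) → ℂ) : Prop :=
  ∀ x, pd 0 (J 0) x - pd 1 (J 1) x - pd 2 (J 2) x = 0

lemma contDiff_pd {f : (Fin 3 → ℝ) → ℂ} (hf : ContDiff ℝ (⊤ : ℕ∞) f) (μ : Fin 3) :
    ContDiff ℝ (⊤ : ℕ∞) (pd μ f) := by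
  have h1 : ContDiff ℝ (⊤ : ℕ∞) (fderiv ℝ f) := hf.fderiv_right (by simp)
  exact (ContinuousLinearMap.apply ℝ ℂ (Pi.single μ 1)).contDiff.comp h1

lemma contDiff_conj {f : (Fin 3 → ℝ) → ℂ} (hf : ContDiff ℝ (⊤ : ℕ∞) f) :
    ContDiff ℝ (⊤ : ℕ∞) (fun x => conj (f x)) := by
  have := (Complex.conjCLE.toContinuousLinearMap.contDiff (n := (⊤ : ℕ∞))).comp hf
  exact this

lemma pd_conj {f : (Fin 3 → ℝ) → ℂ} {x : Fin 3 → ℝ} (μ : Fin 3)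
    (hf : DifferentiableAt ℝ f x) :
    pd μ (fun y => conj (f y)) x = conj (pd μ f x) := by
  have h : HasFDerivAt (fun y => conj (f y))
      (Complex.conjCLE.toContinuousLinearMap.comp (fderiv ℝ f x)) x :=
    Complex.conjCLE.toContinuousLinearMap.hasFDerivAt.comp x hf.hasFDerivAt
  rw [pd, h.fderiv]
  simp [pd]

lemma pd_mul {f g : (Fin 3 → ℝ) → ℂ} {x : Fin 3 → ℝ} (μ : Fin 3)
    (hf : DifferentiableAt ℝ f x) (hg : DifferentiableAt ℝ g x) :
    pd μ (fun y => f y * g y) x = pd μ f x * g x + f x * pd μ g x := by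
  rw [pd, fderiv_fun_mul hf hg]
  simp [pd, smul_eq_mul]; ring

lemma pd_sub {f g : (Fin 3 → ℝ) → ℂ} {x : Fin 3 → ℝ} (μ : Fin 3)
    (hf : DifferentiableAt ℝ f x) (hg : DifferentiableAt ℝ g x) :
    pd μ (fun y => f y - g y) x = pd μ f x - pd μ g x := by
  rw [pd, fderiv_fun_sub hf hg]; simp [pd]

lemma pd_const_sub {f : (Fin 3 → ℝ) → ℂ} {x : Fin 3 → ℝ} (μ : Fin 3) (c : ℂ)
    (hf : DifferentiableAt ℝ f x) :
    pd μ (fun y => c - f y) x = - pd μ f x := by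
  rw [pd, fderiv_fun_sub (differentiableAt_const c) hf]; simp [pd]

lemma pd_inv {g : (Fin 3 → ℝ) → ℂ} {x : Fin 3 → ℝ} (μ : Fin 3)
    (hg : DifferentiableAt ℝ g x) (hgx : g x ≠ 0) :
    pd μ (fun y => (g y)⁻¹) x = -(pd μ g x) / (g x) ^ 2 := by
  have h : HasFDerivAt (fun y => (g y)⁻¹)
      ((-ContinuousLinearMap.mulLeftRight ℝ ℂ (g x)⁻¹ (g x)⁻¹).comp (fderiv ℝ g x)) x :=
    (hasFDerivAt_inv' (𝕜 := ℝ) hgx).comp x hg.hasFDerivAt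
  rw [pd, h.fderiv]
  simp only [ContinuousLinearMap.comp_apply, ContinuousLinearMap.neg_apply,
    ContinuousLinearMap.mulLeftRight_apply]
  rw [pd, div_eq_mul_inv, pow_two, mul_inv]
  ring

lemma pd_sq {f : (Fin 3 → ℝ) → ℂ} {x : Fin 3 → ℝ} (μ : Fin 3)
    (hf : DifferentiableAt ℝ f x) :
    pd μ (fun y => (f y) ^ 2) x = 2 * f x * pd μ f x := by
  have h : (fun y => (f y) ^ 2) = fun y => f y * f y := by funext y; ring
  rw [h, pd_mul μ hf hf]; ring

/-- Derivative of the conjugate current in direction `ν`. -/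
lemma pd_J (u : (Fin 3 → ℝ) → ℂ) (hu : ContDiff ℝ (⊤ : ℕ∞) u)
    (hD : ∀ y, (1 : ℂ) - u y * conj (u y) ≠ 0) (μ ν : Fin 3) (x : Fin 3 → ℝ) :
    pd ν (fun y => (pd μ (fun z => conj (u z)) y - (conj (u y)) ^ 2 * pd μ u y) /
        (1 - u y * conj (u y)) ^ 2) x
    = (conj (pd ν (pd μ u) x) - (2 * conj (u x) * conj (pd ν u x) * pd μ u x
          + (conj (u x)) ^ 2 * pd ν (pd μ u) x)) / (1 - u x * conj (u x)) ^ 2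
      + 2 * (conj (pd μ u x) - (conj (u x)) ^ 2 * pd μ u x)
          * (pd ν u x * conj (u x) + u x * conj (pd ν u x)) / (1 - u x * conj (u x)) ^ 3 := by
  have hud : ∀ y, DifferentiableAt ℝ u y := fun y => hu.differentiable (by simp) y
  have hA : ContDiff ℝ (⊤ : ℕ∞) (pd μ u) := contDiff_pd hu μ
  have hAd : ∀ y, DifferentiableAt ℝ (pd μ u) y := fun y => hA.differentiable (by simp) y
  have hcu : ContDiff ℝ (⊤ : ℕ∞) (fun y => conj (u y)) := contDiff_conj hu
  have hcud : ∀ y, DifferentiableAt ℝ (fun z => conj (u z)) y :=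
    fun y => hcu.differentiable (by simp) y
  have hcA : ContDiff ℝ (⊤ : ℕ∞) (fun y => conj (pd μ u y)) := contDiff_conj hA
  have hfun : (fun y => (pd μ (fun z => conj (u z)) y - (conj (u y)) ^ 2 * pd μ u y) /
        (1 - u y * conj (u y)) ^ 2)
      = fun y => (conj (pd μ u y) - (conj (u y)) ^ 2 * pd μ u y)
          * (((1 - u y * conj (u y)) ^ 2)⁻¹) := by
    funext y
    rw [pd_conj μ (hud y), div_eq_mul_inv]
  rw [hfun]
  have hsq : DifferentiableAt ℝ (fun y => (conj (u y)) ^ 2) x :=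
    ((hcu.differentiable (by simp) x).pow 2)
  have hNd : DifferentiableAt ℝ
      (fun y => conj (pd μ u y) - (conj (u y)) ^ 2 * pd μ u y) x :=
    ((hcA.differentiable (by simp) x).sub (hsq.mul (hAd x)))
  have hEd : DifferentiableAt ℝ (fun y => (1 : ℂ) - u y * conj (u y)) x :=
    (differentiableAt_const 1).sub ((hud x).mul (hcud x))
  have hDd : DifferentiableAt ℝ (fun y => ((1 : ℂ) - u y * conj (u y)) ^ 2) x := hEd.pow 2
  have hDne : ((1 : ℂ) - u x * conj (u x)) ^ 2 ≠ 0 := pow_ne_zero _ (hD x)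
  rw [pd_mul (g := fun y => (((1 : ℂ) - u y * conj (u y)) ^ 2)⁻¹) ν hNd (hDd.inv hDne)]
  rw [pd_inv ν hDd hDne]
  rw [pd_sub (g := fun y => (conj (u y)) ^ 2 * pd μ u y) ν (hcA.differentiable (by simp) x) (hsq.mul (hAd x))]
  rw [pd_conj ν (hAd x)]
  rw [pd_mul ν hsq (hAd x)]
  rw [pd_sq ν (hcud x)]
  rw [pd_conj ν (hud x)]
  rw [pd_sq ν hEd]
  rw [pd_const_sub (f := fun y => u y * conj (u y)) ν 1 ((hud x).mul (hcud x))]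
  rw [pd_mul ν (hud x) (hcud x)]
  rw [pd_conj ν (hud x)]
  have h3 := hD x
  field_simp

/-- Pure algebra: conservation follows from the equation of motion and its conjugate. -/
lemma qp1_alg (c c' a0 a0' a1 a1' a2 a2' s0 s0' s1 s1' s2 s2' : ℂ)
    (hD : (1 : ℂ) - c * c' ≠ 0)
    (he : (1 - c * c') * (s0 - s1 - s2) + 2 * c' * (a0 * a0 - a1 * a1 - a2 * a2) = 0)
    (he' : (1 - c * c') * (s0' - s1' - s2') + 2 * c * (a0' * a0' - a1' * a1' - a2' * a2') = 0) :
    ((s0' - (2 * c' * a0' * a0 + c' ^ 2 * s0)) / (1 - c * c') ^ 2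
        + 2 * (a0' - c' ^ 2 * a0) * (a0 * c' + c * a0') / (1 - c * c') ^ 3)
    - ((s1' - (2 * c' * a1' * a1 + c' ^ 2 * s1)) / (1 - c * c') ^ 2
        + 2 * (a1' - c' ^ 2 * a1) * (a1 * c' + c * a1') / (1 - c * c') ^ 3)
    - ((s2' - (2 * c' * a2' * a2 + c' ^ 2 * s2)) / (1 - c * c') ^ 2
        + 2 * (a2' - c' ^ 2 * a2) * (a2 * c' + c * a2') / (1 - c * c') ^ 3) = 0 := by
  have key : (1 - c * c') * ((s0' - (2 * c' * a0' * a0 + c' ^ 2 * s0))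
      - (s1' - (2 * c' * a1' * a1 + c' ^ 2 * s1))
      - (s2' - (2 * c' * a2' * a2 + c' ^ 2 * s2)))
      + 2 * ((a0' - c' ^ 2 * a0) * (a0 * c' + c * a0')
           - (a1' - c' ^ 2 * a1) * (a1 * c' + c * a1')
           - (a2' - c' ^ 2 * a2) * (a2 * c' + c * a2')) = 0 := by
    linear_combination he' - c' ^ 2 * he
  have hinv : (1 - c * c') * (1 - c * c')⁻¹ = 1 := mul_inv_cancel₀ hD
  simp only [div_eq_mul_inv, ← inv_pow]
  linear_combination ((1 - c * c')⁻¹) ^ 3 * key - ((s0' - (2 * c' * a0' * a0 + c' ^ 2 * s0)) - (s1' - (2 * c' * a1' * a1 + c' ^ 2 * s1)) - (s2' - (2 * c' * a2' * a2 + c' ^ 2 * s2))) * ((1 - c * c')⁻¹) ^ 2 * hinv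

/-- The current `j̄_μ = (∂_μū − ū²∂_μu)/(1−|u|²)²` of the `QP¹`-model is conserved
on solutions of the equation of motion. -/
theorem qp1_jbar_current_conserved (u : (Fin 3 → ℝ) → ℂ) (hu : ContDiff ℝ (⊤ : ℕ∞) u)
    (hdisk : ∀ x, ‖u x‖ < 1)
    (heom : ∀ x, (1 - u x * conj (u x)) * dalembert u x
        + 2 * conj (u x) * minkGrad u u x = 0) :
    IsConservedCurrent (fun μ x =>
      (pd μ (fun y => conj (u y)) x - (conj (u x)) ^ 2 * pd μ u x) /
        (1 - u x * conj (u x)) ^ 2) := by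
  have hD : ∀ y, (1 : ℂ) - u y * conj (u y) ≠ 0 := by
    intro y
    rw [Complex.mul_conj, ← Complex.ofReal_one, ← Complex.ofReal_sub, Complex.ofReal_ne_zero]
    have h2 := hdisk y
    have h3 : Complex.normSq (u y) < 1 := by
      rw [Complex.normSq_eq_norm_sq]
      nlinarith [norm_nonneg (u y)]
    linarith
  intro x
  have he := heom x
  simp only [dalembert, minkGrad] at he
  have he' := congrArg (starRingEnd ℂ) (heom x)
  simp only [dalembert, minkGrad, map_add, map_mul, map_sub, map_one, map_zero, map_ofNat,
    Complex.conj_conj] at he'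
  show pd 0 (fun y => (pd 0 (fun z => conj (u z)) y - (conj (u y)) ^ 2 * pd 0 u y) /
        (1 - u y * conj (u y)) ^ 2) x
    - pd 1 (fun y => (pd 1 (fun z => conj (u z)) y - (conj (u y)) ^ 2 * pd 1 u y) /
        (1 - u y * conj (u y)) ^ 2) x
    - pd 2 (fun y => (pd 2 (fun z => conj (u z)) y - (conj (u y)) ^ 2 * pd 2 u y) /
        (1 - u y * conj (u y)) ^ 2) x = 0
  rw [pd_J u hu hD 0 0 x, pd_J u hu hD 1 1 x, pd_J u hu hD 2 2 x]
  exact qp1_alg (u x) (conj (u x)) (pd 0 u x) (conj (pd 0 u x)) (pd 1 u x) (conj (pd 1 u x))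
    (pd 2 u x) (conj (pd 2 u x)) (pd 0 (pd 0 u) x) (conj (pd 0 (pd 0 u) x))
    (pd 1 (pd 1 u) x) (conj (pd 1 (pd 1 u) x)) (pd 2 (pd 2 u) x) (conj (pd 2 (pd 2 u) x))
    (hD x) (by linear_combination he) (by linear_combination he')
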